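/- arXiv:1604.07814 — 3 statements merged into one kernel-verified Lean document; each statement's English description precedes it below -/
import Mathlib

section
/- Let c > 0 and x ∈ X, and suppose y ∈ X minimizes the function z ↦ (z − x)ᵀ(Q_d + cI)(z − x) + (z − x)ᵀ(2Qx + q) over X. Then (y − x)ᵀ(2Qx + q) ≤ −c‖y − x‖². -/
open Matrix Filter Topology
open scoped RealInnerProductSpace

noncomputable section

/-- The product decision space of `m` agents, agent `i` having an `n i`-dimensional
Euclidean decision vector; equipped with the (ℓ²-of-ℓ²) Euclidean norm. -/
abbrev JVec (m : ℕ) (n : Fin m → ℕ) :=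
  PiLp 2 (fun i : Fin m => EuclideanSpace ℝ (Fin (n i)))

/-- `upd x i z` is the vector `(z, x^{-i})`: `x` with its `i`-th block replaced by `z`. -/
def upd {m : ℕ} {n : Fin m → ℕ} (x : JVec m n) (i : Fin m)
    (z : EuclideanSpace ℝ (Fin (n i))) : JVec m n :=
  WithLp.toLp 2 (Function.update x i z)
/-- The index set of the stacked vector `x = (x^1, …, x^m)`. -/
abbrev JIdx (m : ℕ) (n : Fin m → ℕ) := Σ i : Fin m, Fin (n i)

/-- Flatten a block vector into a plain vector indexed by `JIdx m n`. -/
def flat {m : ℕ} {n : Fin m → ℕ} (x : JVec m n) : JIdx m n → ℝ :=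
  fun p => x p.1 p.2

/-- The block-diagonal part `Q_d` of `Q`: equal to `Q` on entries whose row and column
indices lie in the same agent block, and zero elsewhere. -/
def blockDiagPart {m : ℕ} {n : Fin m → ℕ} (Q : Matrix (JIdx m n) (JIdx m n) ℝ) :
    Matrix (JIdx m n) (JIdx m n) ℝ :=
  Matrix.of fun p q => if p.1 = q.1 then Q p q else 0

/-- The quadratic objective `f(x) = xᵀ Q x + qᵀ x`. -/
def quadF {m : ℕ} {n : Fin m → ℕ} (Q : Matrix (JIdx m n) (JIdx m n) ℝ)
    (q : JIdx m n → ℝ) (x : JVec m n) : ℝ :=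
  flat x ⬝ᵥ (Q *ᵥ flat x) + q ⬝ᵥ flat x

/-- The largest eigenvalue of a real symmetric (Hermitian) matrix. -/
noncomputable def maxEig {ι : Type*} [Fintype ι] [DecidableEq ι]
    {A : Matrix ι ι ℝ} (hA : A.IsHermitian) : ℝ :=
  ⨆ p, hA.eigenvalues p

/-!
Comparing the minimiser `y` with the feasible point `x`, whose model value is `0`, gives
`(y - x)ᵀ(Q_d + cI)(y - x) + (y - x)ᵀ(2Qx + q) ≤ 0`. Since `Q_d = ∑ᵢ Dᵢ Q Dᵢ` with `Dᵢ` the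
diagonal projection onto block `i`, it is positive semidefinite, so the term `(y - x)ᵀ Q_d (y - x)`
can be dropped.
-/

open Matrix

theorem blockDiagPart_eq_sum {m : ℕ} {n : Fin m → ℕ} (Q : Matrix (JIdx m n) (JIdx m n) ℝ) :
    blockDiagPart Q = ∑ i, diagonal (fun p : JIdx m n => if p.1 = i then 1 else 0) * Q *
      diagonal (fun p : JIdx m n => if p.1 = i then 1 else 0) := by
  ext p r
  simp [blockDiagPart, Matrix.sum_apply, diagonal_mul, mul_diagonal, eq_comm]

theorem Matrix.PosSemidef.blockDiagPart {m : ℕ} {n : Fin m → ℕ}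
    {Q : Matrix (JIdx m n) (JIdx m n) ℝ} (hQ : Q.PosSemidef) :
    (blockDiagPart Q).PosSemidef := by
  rw [blockDiagPart_eq_sum]
  refine posSemidef_sum _ fun i _ => ?_
  simpa [diagonal_conjTranspose] using hQ.conjTranspose_mul_mul_same
    (diagonal fun p : JIdx m n => if p.1 = i then (1 : ℝ) else 0)

theorem flat_sub {m : ℕ} {n : Fin m → ℕ} (v w : JVec m n) :
    flat (v - w) = flat v - flat w :=
  rfl

theorem flat_dotProduct_flat {m : ℕ} {n : Fin m → ℕ} (v : JVec m n) :
    flat v ⬝ᵥ flat v = ‖v‖ ^ 2 := by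
  simp only [PiLp.norm_sq_eq_of_L2, Real.norm_eq_abs, sq_abs,
    dotProduct, flat, Fintype.sum_sigma, ← sq]

theorem dotProduct_add_smul_one_mulVec {ι : Type*} [Fintype ι] [DecidableEq ι]
    (A : Matrix ι ι ℝ) (c : ℝ) (d : ι → ℝ) :
    d ⬝ᵥ ((A + c • 1) *ᵥ d) = d ⬝ᵥ (A *ᵥ d) + c * (d ⬝ᵥ d) := by
  rw [add_mulVec, dotProduct_add, smul_mulVec, one_mulVec, dotProduct_smul, smul_eq_mul]

theorem stmt_8_general {m : ℕ} {n : Fin m → ℕ}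
    (X : ∀ i : Fin m, Set (EuclideanSpace ℝ (Fin (n i))))
    (Q : Matrix (JIdx m n) (JIdx m n) ℝ) (hQ : Q.PosSemidef)
    (q : JIdx m n → ℝ)
    (c : ℝ)
    (x : JVec m n) (hx : ∀ i, x i ∈ X i)
    (y : JVec m n)
    (hy : ∀ v : JVec m n, (∀ i, v i ∈ X i) →
      (flat y - flat x) ⬝ᵥ ((blockDiagPart Q + c • (1 : Matrix (JIdx m n) (JIdx m n) ℝ))
            *ᵥ (flat y - flat x))
          + (flat y - flat x) ⬝ᵥ ((2 : ℝ) • (Q *ᵥ flat x) + q) ≤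
        (flat v - flat x) ⬝ᵥ ((blockDiagPart Q + c • (1 : Matrix (JIdx m n) (JIdx m n) ℝ))
            *ᵥ (flat v - flat x))
          + (flat v - flat x) ⬝ᵥ ((2 : ℝ) • (Q *ᵥ flat x) + q)) :
    (flat y - flat x) ⬝ᵥ ((2 : ℝ) • (Q *ᵥ flat x) + q) ≤ -c * ‖y - x‖ ^ 2 := by
  have hmin := hy x hx
  rw [sub_self, mulVec_zero, dotProduct_zero, zero_dotProduct, add_zero,
    dotProduct_add_smul_one_mulVec, ← flat_sub, flat_dotProduct_flat] at hmin
  have hQd := hQ.blockDiagPart.dotProduct_mulVec_nonneg (flat (y - x))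
  rw [star_trivial] at hQd
  rw [← flat_sub]
  linarith

/-- If `y ∈ X` minimizes `z ↦ (z − x)ᵀ(Q_d + cI)(z − x) + (z − x)ᵀ(2Qx + q)` over `X`,
then `(y − x)ᵀ(2Qx + q) ≤ −c‖y − x‖²`. -/
theorem stmt_8 {m : ℕ} {n : Fin m → ℕ}
    (X : ∀ i : Fin m, Set (EuclideanSpace ℝ (Fin (n i))))
    (hXne : ∀ i, (X i).Nonempty)
    (hXcpt : ∀ i, IsCompact (X i))
    (hXcvx : ∀ i, Convex ℝ (X i))
    (Q : Matrix (JIdx m n) (JIdx m n) ℝ) (hQ : Q.PosSemidef)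
    (q : JIdx m n → ℝ)
    (c : ℝ) (hc : 0 < c)
    (x : JVec m n) (hx : ∀ i, x i ∈ X i)
    (y : JVec m n) (hyX : ∀ i, y i ∈ X i)
    (hy : ∀ v : JVec m n, (∀ i, v i ∈ X i) →
      (flat y - flat x) ⬝ᵥ ((blockDiagPart Q + c • (1 : Matrix (JIdx m n) (JIdx m n) ℝ))
            *ᵥ (flat y - flat x))
          + (flat y - flat x) ⬝ᵥ ((2 : ℝ) • (Q *ᵥ flat x) + q) ≤
        (flat v - flat x) ⬝ᵥ ((blockDiagPart Q + c • (1 : Matrix (JIdx m n) (JIdx m n) ℝ))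
            *ᵥ (flat v - flat x))
          + (flat v - flat x) ⬝ᵥ ((2 : ℝ) • (Q *ᵥ flat x) + q)) :
    (flat y - flat x) ⬝ᵥ ((2 : ℝ) • (Q *ᵥ flat x) + q) ≤ -c * ‖y - x‖ ^ 2 :=
  stmt_8_general X Q hQ q c x hx y hy
end
end

section
/- Suppose f is quadratic, f(x) = xᵀQx + qᵀx with Q symmetric positive semidefinite. If c > ((m−1)/(2m−1)) · 2 λ_max(Q_z), then the sequence (x_k) generated by the regularized Jacobi iteration satisfies dist(x_k, X*) → 0 as k → ∞, where X* is the (nonempty) set of minimizers of f over X. -/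
/-!
Testing the optimality of each block of `x_{k+1}` against the midpoint of `x_k^i` and
`x_{k+1}^i`, and summing over the agents, gives the sufficient decrease
`f(x_{k+1}) + (3c/2 - λ_max(Q_z)) ‖x_{k+1} - x_k‖² ≤ f(x_k)`. The hypothesis on `c` makes the
coefficient positive: `Q_z` has zero diagonal, so `λ_max(Q_z) ≥ 0` and `(m-1)/(2m-1) ≥ 1/3` for
`m ≥ 2`, while `Q_z = 0` for `m ≤ 1`. Hence `x_{k+1} - x_k → 0`, and by closedness of the graph of
the Jacobi map every cluster point of the (bounded) iterates is a fixed point of it. At a fixed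
point each block satisfies its first-order optimality condition; summed over the blocks, and
since `X` is a product, this is the first-order condition of the convex function `f` on `X`.
-/

open Matrix Filter Topology
open scoped RealInnerProductSpace

noncomputable section

namespace Matrix.IsHermitian

variable {ι : Type*} [Fintype ι] {A : Matrix ι ι ℝ}

lemma dotProduct_mulVec_comm (hA : A.IsHermitian) (v w : ι → ℝ) :
    v ⬝ᵥ A *ᵥ w = w ⬝ᵥ A *ᵥ v := by
  rw [dotProduct_mulVec, ← mulVec_transpose, ← conjTranspose_eq_transpose_of_trivial, hA,
    dotProduct_comm]

variable [DecidableEq ι]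

lemma posSemidef_smul_one_sub (hA : A.IsHermitian) {μ : ℝ} (hμ : ∀ i, hA.eigenvalues i ≤ μ) :
    (μ • 1 - A).PosSemidef := by
  have h : μ • 1 - A = Unitary.conjStarAlgAut ℝ _ hA.eigenvectorUnitary
      (diagonal fun i => μ - hA.eigenvalues i) := by
    rw [← diagonal_sub, map_sub, ← smul_one_eq_diagonal, map_smul, map_one]
    conv_lhs => rw [hA.spectral_theorem]
    simp
  rw [h]
  simp [Unitary.conjStarAlgAut_apply, Unitary.isUnit_coe.posSemidef_star_right_conjugate_iff,
    posSemidef_diagonal_iff, hμ]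

lemma dotProduct_mulVec_le_maxEig (hA : A.IsHermitian) (v : ι → ℝ) :
    v ⬝ᵥ A *ᵥ v ≤ maxEig hA * (v ⬝ᵥ v) := by
  have := (hA.posSemidef_smul_one_sub fun i =>
    le_ciSup (Set.finite_range hA.eigenvalues).bddAbove i).dotProduct_mulVec_nonneg v
  simp only [star_trivial, sub_mulVec, smul_mulVec, one_mulVec, dotProduct_sub,
    dotProduct_smul, smul_eq_mul, sub_nonneg] at this
  exact this

lemma maxEig_nonneg_of_diag_eq_zero (hA : A.IsHermitian) (hdiag : ∀ p, A p p = 0) :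
    0 ≤ maxEig hA := by
  rcases isEmpty_or_nonempty ι with hι | ⟨⟨p⟩⟩
  · -- an empty supremum of reals is `0`
    simp [maxEig, Real.iSup_of_isEmpty]
  · simpa [hdiag] using hA.dotProduct_mulVec_le_maxEig (Pi.single p 1)

lemma maxEig_eq_zero_of_eq_zero (hA : A.IsHermitian) (h : A = 0) : maxEig hA = 0 := by
  simp [maxEig, hA.eigenvalues_eq_zero_iff.mpr h]

end Matrix.IsHermitian

lemma nonneg_of_forall_Ioc_mul_add_sq_mul_nonneg {G C : ℝ}
    (h : ∀ t ∈ Set.Ioc (0 : ℝ) 1, 0 ≤ t * G + t ^ 2 * C) : 0 ≤ G := by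
  have hlim : Tendsto (fun t : ℝ => G + t * C) (𝓝[>] 0) (𝓝 G) := by
    have : Continuous fun t : ℝ => G + t * C := by fun_prop
    simpa using (this.tendsto 0).mono_left nhdsWithin_le_nhds
  refine ge_of_tendsto hlim ?_
  filter_upwards [Ioc_mem_nhdsGT one_pos] with t ht
  exact nonneg_of_mul_nonneg_right (by linarith [h t ht]) ht.1

lemma tendsto_zero_of_add_mul_le {F S : ℕ → ℝ} {ε : ℝ} (hε : 0 < ε) (hS : ∀ k, 0 ≤ S k)
    (hF : BddBelow (Set.range F)) (h : ∀ k, F (k + 1) + ε * S k ≤ F k) :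
    Tendsto S atTop (𝓝 0) := by
  have hanti : Antitone F :=
    antitone_nat_of_succ_le fun k => by nlinarith [h k, hS k]
  have hF' := tendsto_atTop_ciInf hanti hF
  have hdiff : Tendsto (fun k => (F k - F (k + 1)) / ε) atTop (𝓝 0) := by
    simpa using (hF'.sub (hF'.comp (tendsto_add_atTop_nat 1))).div_const ε
  exact squeeze_zero hS (fun k => by rw [le_div_iff₀ hε]; linarith [h k]) hdiff

lemma Metric.tendsto_infDist_of_mapClusterPt_mem {α : Type*} [PseudoMetricSpace α]
    {u : ℕ → α} {K S : Set α} (hK : IsCompact K) (hu : ∀ k, u k ∈ K)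
    (hS : ∀ a, MapClusterPt a atTop u → a ∈ S) :
    Tendsto (fun k => infDist (u k) S) atTop (𝓝 0) := by
  refine tendsto_of_subseq_tendsto fun ns hns => ?_
  obtain ⟨a, -, φ, hφ, hlim⟩ := hK.tendsto_subseq fun k => hu (ns k)
  have ha : a ∈ S := hS a ((hlim.mapClusterPt).of_comp (hns.comp hφ.tendsto_atTop))
  refine ⟨φ, ?_⟩
  rw [← infDist_zero_of_mem ha]
  exact ((continuous_infDist_pt S).tendsto a).comp hlim

section JacobiIteration

variable {m : ℕ} {n : Fin m → ℕ}

lemma isCompact_setOf_forall_mem {X : ∀ i : Fin m, Set (EuclideanSpace ℝ (Fin (n i)))}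
    (hX : ∀ i, IsCompact (X i)) : IsCompact {y : JVec m n | ∀ i, y i ∈ X i} := by
  convert (PiLp.homeomorph 2 _).isCompact_preimage.mpr (isCompact_univ_pi hX) using 1
  ext y
  simp [PiLp.homeomorph]

lemma continuous_quadF (Q : Matrix (JIdx m n) (JIdx m n) ℝ) (q : JIdx m n → ℝ) :
    Continuous (quadF Q q) := by
  unfold quadF flat
  fun_prop

lemma flat_add (x y : JVec m n) : flat (x + y) = flat x + flat y := rfl

lemma flat_smul (t : ℝ) (x : JVec m n) : flat (t • x) = t • flat x := rfl

lemma flat_upd_zero_apply (d : JVec m n) (i : Fin m) (p : JIdx m n) :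
    flat (upd 0 i (d i)) p = if p.1 = i then flat d p else 0 := by
  obtain ⟨j, a⟩ := p
  by_cases h : j = i
  · subst h; simp [flat, upd]
  · simp [flat, upd, h]

lemma flat_eq_sum_flat_upd_zero (d : JVec m n) : flat d = ∑ i, flat (upd 0 i (d i)) := by
  ext p
  simp [Finset.sum_apply, flat_upd_zero_apply]

lemma dotProduct_flat_self (d : JVec m n) : flat d ⬝ᵥ flat d = ‖d‖ ^ 2 := by
  rw [PiLp.norm_sq_eq_of_L2, dotProduct, ← Finset.univ_sigma_univ, Finset.sum_sigma]
  refine Finset.sum_congr rfl fun i _ => ?_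
  rw [EuclideanSpace.real_norm_sq_eq]
  simp only [flat, sq]

lemma sum_dotProduct_mulVec_flat_upd_zero (Q : Matrix (JIdx m n) (JIdx m n) ℝ) (d : JVec m n) :
    ∑ i, flat (upd 0 i (d i)) ⬝ᵥ Q *ᵥ flat (upd 0 i (d i)) =
      flat d ⬝ᵥ blockDiagPart Q *ᵥ flat d := by
  simp only [dotProduct, mulVec, flat_upd_zero_apply, blockDiagPart, of_apply]
  rw [Finset.sum_comm]
  refine Finset.sum_congr rfl fun p _ => ?_
  simp only [ite_mul, zero_mul, Finset.mul_sum]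
  rw [Finset.sum_comm]
  refine Finset.sum_congr rfl fun r _ => ?_
  by_cases h : p.1 = r.1 <;> simp [h, eq_comm]

lemma quadF_add {Q : Matrix (JIdx m n) (JIdx m n) ℝ} (hQ : Q.IsHermitian) (q : JIdx m n → ℝ)
    (x d : JVec m n) :
    quadF Q q (x + d) =
      quadF Q q x + (2 • Q *ᵥ flat x + q) ⬝ᵥ flat d + flat d ⬝ᵥ Q *ᵥ flat d := by
  simp only [quadF, flat_add, mulVec_add, dotProduct_add, add_dotProduct, smul_dotProduct,
    hQ.dotProduct_mulVec_comm (flat d) (flat x), dotProduct_comm (Q *ᵥ flat x)]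
  ring

lemma upd_eq_add_upd_zero (x : JVec m n) (i : Fin m) (z : EuclideanSpace ℝ (Fin (n i))) :
    upd x i z = x + upd 0 i (z - x i) := by
  ext j : 1
  by_cases h : j = i
  · subst h; simp [upd]
  · simp [upd, h]

def regularizedBlockObj (Q : Matrix (JIdx m n) (JIdx m n) ℝ) (q : JIdx m n → ℝ) (c : ℝ)
    (y : JVec m n) (i : Fin m) (z : EuclideanSpace ℝ (Fin (n i))) : ℝ :=
  quadF Q q (upd y i z) + c * ‖z - y i‖ ^ 2

def IsJacobiStep (X : ∀ i : Fin m, Set (EuclideanSpace ℝ (Fin (n i))))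
    (Q : Matrix (JIdx m n) (JIdx m n) ℝ) (q : JIdx m n → ℝ) (c : ℝ) (a b : JVec m n) : Prop :=
  ∀ i, b i ∈ X i ∧ ∀ z ∈ X i, regularizedBlockObj Q q c a i (b i) ≤ regularizedBlockObj Q q c a i z

lemma continuous_regularizedBlockObj (Q : Matrix (JIdx m n) (JIdx m n) ℝ) (q : JIdx m n → ℝ)
    (c : ℝ) (i : Fin m) :
    Continuous fun p : JVec m n × EuclideanSpace ℝ (Fin (n i)) =>
      regularizedBlockObj Q q c p.1 i p.2 := by
  have hupd : Continuous fun p : JVec m n × EuclideanSpace ℝ (Fin (n i)) => upd p.1 i p.2 := by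
    unfold upd
    fun_prop
  unfold regularizedBlockObj
  have := continuous_quadF Q q
  fun_prop

variable {X : ∀ i : Fin m, Set (EuclideanSpace ℝ (Fin (n i)))}
  {Q : Matrix (JIdx m n) (JIdx m n) ℝ} {q : JIdx m n → ℝ} {c : ℝ}

lemma regularizedBlockObj_add_smul (hQ : Q.IsHermitian) (a : JVec m n) (i : Fin m)
    (u : EuclideanSpace ℝ (Fin (n i))) (t : ℝ) :
    regularizedBlockObj Q q c a i (a i + t • u) =
      quadF Q q a + t * ((2 • Q *ᵥ flat a + q) ⬝ᵥ flat (upd 0 i u)) +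
        t ^ 2 * (flat (upd 0 i u) ⬝ᵥ Q *ᵥ flat (upd 0 i u) + c * ‖u‖ ^ 2) := by
  have hupd : upd 0 i (a i + t • u - a i) = t • upd 0 i u := by
    ext j : 1
    by_cases h : j = i
    · subst h; simp [upd]
    · simp [upd, h]
  rw [regularizedBlockObj, upd_eq_add_upd_zero, hupd, quadF_add hQ, flat_smul,
    add_sub_cancel_left, norm_smul]
  simp only [dotProduct_smul, mulVec_smul, smul_dotProduct, smul_eq_mul, Real.norm_eq_abs,
    mul_pow, sq_abs]
  ring

lemma regularizedBlockObj_self (y : JVec m n) (i : Fin m) :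
    regularizedBlockObj Q q c y i (y i) = quadF Q q y := by
  simp [regularizedBlockObj, upd]

lemma isClosed_setOf_isJacobiStep (hX : ∀ i, IsClosed (X i)) :
    IsClosed {p : JVec m n × JVec m n | IsJacobiStep X Q q c p.1 p.2} := by
  simp only [IsJacobiStep, Set.ofPred_forall, Set.ofPred_and]
  refine isClosed_iInter fun i => ?_
  have hblock : Continuous fun p : JVec m n × JVec m n => p.2 i :=
    (PiLp.continuous_apply 2 _ i).comp continuous_snd
  have hobj := continuous_regularizedBlockObj Q q c i
  refine ((hX i).preimage hblock).inter <|
    isClosed_iInter fun z => isClosed_iInter fun _ => isClosed_le ?_ ?_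
  · exact hobj.comp (f := fun p : JVec m n × JVec m n => (p.1, p.2 i))
      (continuous_fst.prodMk hblock)
  · exact hobj.comp (f := fun p : JVec m n × JVec m n => (p.1, z))
      (continuous_fst.prodMk continuous_const)

lemma quadF_add_mul_norm_sq_le_of_isJacobiStep (hX : ∀ i, Convex ℝ (X i)) (hQ : Q.PosSemidef)
    (hQz : (Q - blockDiagPart Q).IsHermitian) {a b : JVec m n} (ha : ∀ i, a i ∈ X i)
    (hab : IsJacobiStep X Q q c a b) :
    quadF Q q b + (3 / 2 * c - maxEig hQz) * ‖b - a‖ ^ 2 ≤ quadF Q q a := by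
  set d := b - a with hd
  set g := 2 • Q *ᵥ flat a + q
  set e : Fin m → JIdx m n → ℝ := fun i => flat (upd 0 i (d i))
  have hblock : ∀ i, g ⬝ᵥ e i ≤ -(3 / 2) * (e i ⬝ᵥ Q *ᵥ e i + c * ‖d i‖ ^ 2) := by
    intro i
    have hmid : a i + (1 / 2 : ℝ) • d i ∈ X i :=
      (hX i).add_smul_sub_mem (ha i) (hab i).1 ⟨by norm_num, by norm_num⟩
    have hopt := (hab i).2 _ hmid
    have hb : b i = a i + (1 : ℝ) • d i := by simp [hd]
    rw [hb, regularizedBlockObj_add_smul hQ.1, regularizedBlockObj_add_smul hQ.1] at hopt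
    linarith
  have hsum : g ⬝ᵥ flat d ≤ -(3 / 2) * (flat d ⬝ᵥ blockDiagPart Q *ᵥ flat d + c * ‖d‖ ^ 2) :=
    calc g ⬝ᵥ flat d = ∑ i, g ⬝ᵥ e i := by rw [flat_eq_sum_flat_upd_zero d, dotProduct_sum]
      _ ≤ ∑ i, -(3 / 2) * (e i ⬝ᵥ Q *ᵥ e i + c * ‖d i‖ ^ 2) :=
        Finset.sum_le_sum fun i _ => hblock i
      _ = _ := by
        rw [← Finset.mul_sum, Finset.sum_add_distrib, ← Finset.mul_sum,
          sum_dotProduct_mulVec_flat_upd_zero, PiLp.norm_sq_eq_of_L2 _ d]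
  have hQd : 0 ≤ flat d ⬝ᵥ blockDiagPart Q *ᵥ flat d := by
    rw [← sum_dotProduct_mulVec_flat_upd_zero]
    exact Finset.sum_nonneg fun i _ => by simpa using hQ.dotProduct_mulVec_nonneg (e i)
  have hQz_le : flat d ⬝ᵥ (Q - blockDiagPart Q) *ᵥ flat d ≤ maxEig hQz * ‖d‖ ^ 2 := by
    rw [← dotProduct_flat_self]
    exact hQz.dotProduct_mulVec_le_maxEig _
  have hexpand : quadF Q q b = quadF Q q a + g ⬝ᵥ flat d + flat d ⬝ᵥ Q *ᵥ flat d := by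
    rw [← quadF_add hQ.1, hd, add_sub_cancel]
  rw [sub_mulVec, dotProduct_sub] at hQz_le
  linarith

lemma quadF_le_of_isJacobiStep_self (hX : ∀ i, Convex ℝ (X i)) (hQ : Q.PosSemidef)
    {x : JVec m n} (hx : IsJacobiStep X Q q c x x) {w : JVec m n} (hw : ∀ i, w i ∈ X i) :
    quadF Q q x ≤ quadF Q q w := by
  set d := w - x with hd
  set g := 2 • Q *ᵥ flat x + q
  have hblock : ∀ i, 0 ≤ g ⬝ᵥ flat (upd 0 i (d i)) := by
    intro i
    refine nonneg_of_forall_Ioc_mul_add_sq_mul_nonneg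
      (C := flat (upd 0 i (d i)) ⬝ᵥ Q *ᵥ flat (upd 0 i (d i)) + c * ‖d i‖ ^ 2) fun t ht => ?_
    have hopt := (hx i).2 _ ((hX i).add_smul_sub_mem (hx i).1 (hw i) ⟨ht.1.le, ht.2⟩)
    rw [regularizedBlockObj_self, show w i - x i = d i from rfl,
      regularizedBlockObj_add_smul hQ.1] at hopt
    linarith
  have hlin : 0 ≤ g ⬝ᵥ flat d := by
    rw [flat_eq_sum_flat_upd_zero, dotProduct_sum]
    exact Finset.sum_nonneg fun i _ => hblock i
  have hquad : 0 ≤ flat d ⬝ᵥ Q *ᵥ flat d := by simpa using hQ.dotProduct_mulVec_nonneg (flat d)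
  have hexpand : quadF Q q w = quadF Q q x + g ⬝ᵥ flat d + flat d ⬝ᵥ Q *ᵥ flat d := by
    rw [← quadF_add hQ.1, hd, add_sub_cancel]
  linarith

lemma isJacobiStep_self_of_mapClusterPt (hX : ∀ i, IsClosed (X i)) {x : ℕ → JVec m n}
    (hstep : ∀ k, IsJacobiStep X Q q c (x k) (x (k + 1)))
    (hdiff : Tendsto (fun k => x (k + 1) - x k) atTop (𝓝 0)) {y : JVec m n}
    (hy : MapClusterPt y atTop x) : IsJacobiStep X Q q c y y := by
  obtain ⟨ψ, hψ, hlim⟩ := hy.tendsto_subseq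
  have hnext : Tendsto (fun j => x (ψ j + 1)) atTop (𝓝 y) := by
    simpa using hlim.add (hdiff.comp hψ.tendsto_atTop)
  exact (isClosed_setOf_isJacobiStep hX).mem_of_tendsto (hlim.prodMk_nhds hnext)
    (Eventually.of_forall fun j => hstep (ψ j))

end JacobiIteration

lemma maxEig_lt_three_halves_mul_of_lt {m : ℕ} {n : Fin m → ℕ}
    {Q : Matrix (JIdx m n) (JIdx m n) ℝ} (hQz : (Q - blockDiagPart Q).IsHermitian) {c : ℝ}
    (hc : ((m : ℝ) - 1) / (2 * m - 1) * (2 * maxEig hQz) < c) :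
    maxEig hQz < 3 / 2 * c := by
  rcases Nat.lt_or_ge m 2 with hm | hm
  · have hsub : Subsingleton (Fin m) := Fin.subsingleton_iff_le_one.mpr (by omega)
    have hzero : Q - blockDiagPart Q = 0 := by
      ext p r
      simp [blockDiagPart, Subsingleton.elim p.1 r.1]
    rw [hQz.maxEig_eq_zero_of_eq_zero hzero] at hc ⊢
    linarith
  · have hμ : 0 ≤ maxEig hQz := hQz.maxEig_nonneg_of_diag_eq_zero fun p => by simp [blockDiagPart]
    have hm' : (2 : ℝ) ≤ m := by exact_mod_cast hm
    have hratio : 2 / 3 ≤ ((m : ℝ) - 1) / (2 * m - 1) * 2 := by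
      rw [div_mul_eq_mul_div, le_div_iff₀ (by linarith)]
      linarith
    nlinarith

theorem stmt_13_general {m : ℕ} {n : Fin m → ℕ}
    (X : ∀ i : Fin m, Set (EuclideanSpace ℝ (Fin (n i))))
    (hXcpt : ∀ i, IsCompact (X i))
    (hXcvx : ∀ i, Convex ℝ (X i))
    (Q : Matrix (JIdx m n) (JIdx m n) ℝ) (hQ : Q.PosSemidef)
    (q : JIdx m n → ℝ)
    (hQz : (Q - blockDiagPart Q).IsHermitian)
    (c : ℝ) (hc : ((m : ℝ) - 1) / (2 * m - 1) * (2 * maxEig hQz) < c)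
    (x : ℕ → JVec m n) (hx0 : ∀ i, x 0 i ∈ X i)
    (hrec : ∀ k : ℕ, ∀ i : Fin m, x (k + 1) i ∈ X i ∧
      ∀ z ∈ X i,
        quadF Q q (upd (x k) i (x (k + 1) i)) + c * ‖x (k + 1) i - x k i‖ ^ 2 ≤
          quadF Q q (upd (x k) i z) + c * ‖z - x k i‖ ^ 2) :
    ({y : JVec m n | (∀ i, y i ∈ X i) ∧
        ∀ w : JVec m n, (∀ i, w i ∈ X i) → quadF Q q y ≤ quadF Q q w}).Nonempty ∧
      Tendsto (fun k : ℕ => Metric.infDist (x k)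
        {y : JVec m n | (∀ i, y i ∈ X i) ∧
          ∀ w : JVec m n, (∀ i, w i ∈ X i) → quadF Q q y ≤ quadF Q q w}) atTop (𝓝 0) := by
  have hstep : ∀ k, IsJacobiStep X Q q c (x k) (x (k + 1)) := hrec
  have hmem : ∀ k i, x k i ∈ X i := fun k => Nat.casesOn k hx0 fun k i => (hrec k i).1
  have hK := isCompact_setOf_forall_mem hXcpt
  obtain ⟨xmin, hxmin, hmin⟩ := hK.exists_isMinOn ⟨x 0, hx0⟩ (continuous_quadF Q q).continuousOn
  refine ⟨⟨xmin, hxmin, fun w hw => hmin hw⟩, ?_⟩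
  have hsq : Tendsto (fun k => ‖x (k + 1) - x k‖ ^ 2) atTop (𝓝 0) :=
    tendsto_zero_of_add_mul_le (sub_pos.mpr (maxEig_lt_three_halves_mul_of_lt hQz hc))
      (fun k => by positivity) ⟨quadF Q q xmin, Set.forall_mem_range.mpr fun k => hmin (hmem k)⟩
      fun k => quadF_add_mul_norm_sq_le_of_isJacobiStep hXcvx hQ hQz (hmem k) (hstep k)
  have hdiff : Tendsto (fun k => x (k + 1) - x k) atTop (𝓝 0) :=
    tendsto_zero_iff_norm_tendsto_zero.mpr (by simpa using hsq.sqrt)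
  refine Metric.tendsto_infDist_of_mapClusterPt_mem hK hmem fun y hy => ?_
  have hfix := isJacobiStep_self_of_mapClusterPt (fun i => (hXcpt i).isClosed) hstep hdiff hy
  exact ⟨fun i => (hfix i).1, fun w hw => quadF_le_of_isJacobiStep_self hXcvx hQ hfix hw⟩

/-- Theorem 3: for the quadratic objective, if `c > ((m−1)/(2m−1))·2λ_max(Q_z)`, the
regularized Jacobi iterates satisfy `dist(x_k, X*) → 0`, where `X*` is the (nonempty)
set of minimizers of `f` over `X`. -/
theorem stmt_13 {m : ℕ} {n : Fin m → ℕ} (hm : 0 < m) [Nonempty (JIdx m n)]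
    (X : ∀ i : Fin m, Set (EuclideanSpace ℝ (Fin (n i))))
    (hXne : ∀ i, (X i).Nonempty)
    (hXcpt : ∀ i, IsCompact (X i))
    (hXcvx : ∀ i, Convex ℝ (X i))
    (Q : Matrix (JIdx m n) (JIdx m n) ℝ) (hQ : Q.PosSemidef)
    (q : JIdx m n → ℝ)
    (hQz : (Q - blockDiagPart Q).IsHermitian)
    (c : ℝ) (hc : ((m : ℝ) - 1) / (2 * m - 1) * (2 * maxEig hQz) < c)
    (x : ℕ → JVec m n) (hx0 : ∀ i, x 0 i ∈ X i)
    (hrec : ∀ k : ℕ, ∀ i : Fin m, x (k + 1) i ∈ X i ∧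
      ∀ z ∈ X i,
        quadF Q q (upd (x k) i (x (k + 1) i)) + c * ‖x (k + 1) i - x k i‖ ^ 2 ≤
          quadF Q q (upd (x k) i z) + c * ‖z - x k i‖ ^ 2) :
    ({y : JVec m n | (∀ i, y i ∈ X i) ∧
        ∀ w : JVec m n, (∀ i, w i ∈ X i) → quadF Q q y ≤ quadF Q q w}).Nonempty ∧
      Tendsto (fun k : ℕ => Metric.infDist (x k)
        {y : JVec m n | (∀ i, y i ∈ X i) ∧
          ∀ w : JVec m n, (∀ i, w i ∈ X i) → quadF Q q y ≤ quadF Q q w}) atTop (𝓝 0) :=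
  stmt_13_general X hXcpt hXcvx Q hQ q hQz c hc x hx0 hrec
end
end

section
/- Let c > 0, x ∈ X, and for each i = 1,…,m let u^i ∈ X^i minimize z^i ↦ f(z^i, x^{-i}) + c‖z^i − x^i‖² over X^i; set u = (u^1,…,u^m). Then m · f(u) ≤ m · f(x) + ( −c + (m−1)(√m · L − 2c) ) ‖u − x‖². In particular, if c > ((m−1)/(2m−1)) · √m · L, then f(u) ≤ f(x), with strict inequality unless u = x. -/
open Matrix Filter Topology
open scoped RealInnerProductSpace

noncomputable section

/-!
Write `yⁱ = (uⁱ, x^{-i})`. Testing the minimality of `uⁱ` against `xⁱ` gives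
`f(yⁱ) + c‖uⁱ - xⁱ‖² ≤ f(x)`, and averaging these over `i` with Jensen's inequality bounds `f` at
`x + (u - x)/m`, the mean of the `yⁱ`, by `f(x) - (c/m)‖u - x‖²`. The first-order optimality
condition of `uⁱ` gives `⟪∇f(yⁱ), yⁱ - x⟫ ≤ -2c‖uⁱ - xⁱ‖²`; since `‖u - yⁱ‖ ≤ ‖u - x‖`, the
Lipschitz bound moves this to `∇f(u)`, and summing over `i` (Cauchy–Schwarz gives
`∑ ‖uⁱ - xⁱ‖ ≤ √m ‖u - x‖`) yields `⟪∇f(u), u - x⟫ ≤ (√m L - 2c)‖u - x‖²`. The gradient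
inequality of the convex `f` at `u`, applied towards `x + (u - x)/m`, combines the two bounds.
-/

theorem ConvexOn.add_apply_sub_le_of_hasFDerivAt {E : Type*} [NormedAddCommGroup E]
    [NormedSpace ℝ E] {s : Set E} {f : E → ℝ} {f' : E →L[ℝ] ℝ} {a b : E}
    (hfc : ConvexOn ℝ s f) (ha : a ∈ s) (hb : b ∈ s) (hf : HasFDerivAt f f' a) :
    f a + f' (b - a) ≤ f b := by
  have hline : HasDerivAt (f ∘ AffineMap.lineMap (k := ℝ) a b) (f' (b - a)) 0 :=
    (by simpa using hf : HasFDerivAt f f' (AffineMap.lineMap a b (0 : ℝ))).comp_hasDerivAt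
      (0 : ℝ) AffineMap.hasDerivAt_lineMap
  have hslope := (hfc.comp_affineMap (AffineMap.lineMap a b)).le_slope_of_hasDerivAt
    (by simpa using ha) (by simpa using hb) zero_lt_one hline
  simp only [slope_def_field, Function.comp_apply, AffineMap.lineMap_apply_zero,
    AffineMap.lineMap_apply_one, sub_zero, div_one] at hslope
  linarith

theorem ConvexOn.apply_le_add_inner_gradient {E : Type*} [NormedAddCommGroup E]
    [InnerProductSpace ℝ E] [CompleteSpace E] {s : Set E} {f : E → ℝ} {a b : E}
    (hfc : ConvexOn ℝ s f) (ha : a ∈ s) (hb : b ∈ s) (hf : DifferentiableAt ℝ f a) :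
    f a ≤ f b + ⟪gradient f a, a - b⟫ := by
  have := hfc.add_apply_sub_le_of_hasFDerivAt ha hb hf.hasGradientAt.hasFDerivAt
  rw [InnerProductSpace.toDual_apply_apply, ← neg_sub, inner_neg_right] at this
  linarith

theorem IsMinOn.inner_sub_le_of_hasGradientAt {E : Type*} [NormedAddCommGroup E]
    [InnerProductSpace ℝ E] [CompleteSpace E] {f : E → ℝ} {f' : E} {s : Set E} {c : ℝ} {x y : E}
    (hmin : IsMinOn (fun w => f w + c * ‖w - x‖ ^ 2) s y) (hs : Convex ℝ s) (hx : x ∈ s)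
    (hy : y ∈ s) (hf : HasGradientAt f f' y) :
    ⟪f', y - x⟫ ≤ -(2 * c) * ‖y - x‖ ^ 2 := by
  have hderiv := hf.hasFDerivAt.add (((hasFDerivAt_id y).sub_const x).norm_sq.const_mul c)
  have hnonneg := hmin.localize.hasFDerivWithinAt_nonneg hderiv.hasFDerivWithinAt
    (sub_mem_posTangentConeAt_of_segment_subset (hs.segment_subset hy hx))
  have hsq : ⟪y - x, x - y⟫ = -‖y - x‖ ^ 2 := by
    rw [← neg_sub y x, inner_neg_right, real_inner_self_eq_norm_sq]
  have hflip : ⟪f', y - x⟫ = -⟪f', x - y⟫ := by rw [← inner_neg_right, neg_sub]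
  simp only [id_eq, ContinuousLinearMap.comp_id, _root_.add_apply,
    InnerProductSpace.toDual_apply_apply, _root_.smul_apply, coe_innerSL_apply,
    nsmul_eq_mul, Nat.cast_ofNat, smul_eq_mul, hsq] at hnonneg
  linarith

theorem PiLp.sum_norm_apply_le_sqrt_card_mul_norm {ι : Type*} [Fintype ι] {β : ι → Type*}
    [∀ i, SeminormedAddCommGroup (β i)] (w : PiLp 2 β) :
    ∑ i, ‖w i‖ ≤ √(Fintype.card ι) * ‖w‖ := by
  simpa [PiLp.norm_eq_of_L2] using
    Real.sum_mul_le_sqrt_mul_sqrt Finset.univ (fun _ => (1 : ℝ)) (fun i => ‖w i‖)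

section Blocks

variable {m : ℕ} {n : Fin m → ℕ}

@[simp]
theorem upd_apply_self (x : JVec m n) (i : Fin m) (z : EuclideanSpace ℝ (Fin (n i))) :
    upd x i z i = z := by
  simp [upd]

@[simp]
theorem upd_apply_of_ne (x : JVec m n) {i j : Fin m} (h : j ≠ i)
    (z : EuclideanSpace ℝ (Fin (n i))) : upd x i z j = x j := by
  simp [upd, Function.update_of_ne h]

theorem upd_eq_add_single (x : JVec m n) (i : Fin m) (z : EuclideanSpace ℝ (Fin (n i))) :
    upd x i z = x + PiLp.single 2 i (z - x i) := by
  ext1 j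
  rcases eq_or_ne j i with rfl | h <;> simp [*]

@[simp]
theorem upd_self (x : JVec m n) (i : Fin m) : upd x i (x i) = x := by
  simp [upd_eq_add_single]

theorem norm_upd_sub (x : JVec m n) (i : Fin m) (z : EuclideanSpace ℝ (Fin (n i))) :
    ‖upd x i z - x‖ = ‖z - x i‖ := by
  simp [upd_eq_add_single, PiLp.norm_single]

theorem norm_sub_upd_le (x u : JVec m n) (i : Fin m) : ‖u - upd x i (u i)‖ ≤ ‖u - x‖ := by
  rw [← sq_le_sq₀ (norm_nonneg _) (norm_nonneg _), PiLp.norm_sq_eq_of_L2, PiLp.norm_sq_eq_of_L2]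
  gcongr with j
  rcases eq_or_ne j i with rfl | h <;> simp [*]

theorem norm_sub_sq_eq_sum (x u : JVec m n) : ‖u - x‖ ^ 2 = ∑ i, ‖u i - x i‖ ^ 2 := by
  simp [PiLp.norm_sq_eq_of_L2]

theorem sum_upd_sub (x u : JVec m n) : ∑ i, (upd x i (u i) - x) = u - x := by
  ext1 j
  simp [upd_eq_add_single, WithLp.ofLp_sum, Finset.sum_apply]

theorem upd_mem_pi {X : ∀ i, Set (EuclideanSpace ℝ (Fin (n i)))} {x : JVec m n} {i : Fin m}
    {z : EuclideanSpace ℝ (Fin (n i))} (hx : ∀ j, x j ∈ X j) (hz : z ∈ X i) (j : Fin m) :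
    upd x i z j ∈ X j := by
  rcases eq_or_ne j i with rfl | h <;> simp [*]

theorem convex_image_upd {i : Fin m} {s : Set (EuclideanSpace ℝ (Fin (n i)))} (hs : Convex ℝ s)
    (x : JVec m n) : Convex ℝ (upd x i '' s) := by
  rintro _ ⟨z, hz, rfl⟩ _ ⟨w, hw, rfl⟩ a b ha hb hab
  refine ⟨a • z + b • w, hs hz hw ha hb hab, ?_⟩
  ext1 j
  rcases eq_or_ne j i with rfl | h
  · simp
  · simp [h, Convex.combo_self hab]

end Blocks

section Descent

variable {m : ℕ} {n : Fin m → ℕ} {f : JVec m n → ℝ} {x u : JVec m n} {c : ℝ}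

theorem inner_gradient_upd_sub_le {i : Fin m} {s : Set (EuclideanSpace ℝ (Fin (n i)))}
    {z : EuclideanSpace ℝ (Fin (n i))} (hs : Convex ℝ s) (hx : x i ∈ s) (hz : z ∈ s)
    (hf : DifferentiableAt ℝ f (upd x i z))
    (hmin : ∀ w ∈ s, f (upd x i z) + c * ‖z - x i‖ ^ 2 ≤ f (upd x i w) + c * ‖w - x i‖ ^ 2) :
    ⟪gradient f (upd x i z), upd x i z - x⟫ ≤ -(2 * c) * ‖z - x i‖ ^ 2 := by
  have hmin' : IsMinOn (fun w => f w + c * ‖w - x‖ ^ 2) (upd x i '' s) (upd x i z) := by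
    rintro _ ⟨w, hw, rfl⟩
    simpa [norm_upd_sub] using hmin w hw
  simpa [norm_upd_sub] using hmin'.inner_sub_le_of_hasGradientAt (convex_image_upd hs x)
    ⟨x i, hx, upd_self x i⟩ ⟨z, hz, rfl⟩ hf.hasGradientAt

theorem inner_sub_le_of_blockwise {g : JVec m n → JVec m n} {L : ℝ} (hL : 0 ≤ L)
    (hblock : ∀ i, ⟪g (upd x i (u i)), upd x i (u i) - x⟫ ≤ -(2 * c) * ‖u i - x i‖ ^ 2)
    (hLip : ∀ i, ‖g u - g (upd x i (u i))‖ ≤ L * ‖u - upd x i (u i)‖) :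
    ⟪g u, u - x⟫ ≤ (√m * L - 2 * c) * ‖u - x‖ ^ 2 := by
  have hi : ∀ i, ⟪g u, upd x i (u i) - x⟫
      ≤ -(2 * c) * ‖u i - x i‖ ^ 2 + L * ‖u - x‖ * ‖u i - x i‖ := by
    intro i
    calc ⟪g u, upd x i (u i) - x⟫
        = ⟪g (upd x i (u i)), upd x i (u i) - x⟫
          + ⟪g u - g (upd x i (u i)), upd x i (u i) - x⟫ := by rw [inner_sub_left]; ring
      _ ≤ -(2 * c) * ‖u i - x i‖ ^ 2
          + ‖g u - g (upd x i (u i))‖ * ‖upd x i (u i) - x‖ :=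
        add_le_add (hblock i) (real_inner_le_norm _ _)
      _ ≤ -(2 * c) * ‖u i - x i‖ ^ 2 + L * ‖u - x‖ * ‖u i - x i‖ := by
        rw [norm_upd_sub]
        gcongr
        exact (hLip i).trans (by gcongr; exact norm_sub_upd_le x u i)
  have hsum : ∑ i, ‖u i - x i‖ ≤ √m * ‖u - x‖ := by
    simpa using PiLp.sum_norm_apply_le_sqrt_card_mul_norm (u - x)
  calc ⟪g u, u - x⟫ = ∑ i, ⟪g u, upd x i (u i) - x⟫ := by rw [← inner_sum, sum_upd_sub]
    _ ≤ ∑ i, (-(2 * c) * ‖u i - x i‖ ^ 2 + L * ‖u - x‖ * ‖u i - x i‖) :=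
      Finset.sum_le_sum fun i _ => hi i
    _ = -(2 * c) * ‖u - x‖ ^ 2 + L * ‖u - x‖ * ∑ i, ‖u i - x i‖ := by
      rw [Finset.sum_add_distrib, ← Finset.mul_sum, ← Finset.mul_sum, ← norm_sub_sq_eq_sum]
    _ ≤ -(2 * c) * ‖u - x‖ ^ 2 + L * ‖u - x‖ * (√m * ‖u - x‖) := by gcongr
    _ = (√m * L - 2 * c) * ‖u - x‖ ^ 2 := by ring

theorem sum_inv_smul_upd (hm : m ≠ 0) (x u : JVec m n) :
    ∑ i, (m : ℝ)⁻¹ • upd x i (u i) = x + (m : ℝ)⁻¹ • (u - x) :=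
  calc ∑ i, (m : ℝ)⁻¹ • upd x i (u i) = (m : ℝ)⁻¹ • ∑ i, ((upd x i (u i) - x) + x) := by
        simp [Finset.smul_sum]
    _ = (m : ℝ)⁻¹ • ((u - x) + (m : ℝ) • x) := by
        rw [Finset.sum_add_distrib, sum_upd_sub, Finset.sum_const, Finset.card_univ,
          Fintype.card_fin, Nat.cast_smul_eq_nsmul]
    _ = x + (m : ℝ)⁻¹ • (u - x) := by
        rw [smul_add, smul_smul, inv_mul_cancel₀ (Nat.cast_ne_zero.2 hm), one_smul, add_comm]

theorem ConvexOn.apply_add_inv_smul_sub_le {s : Set (JVec m n)} (hfc : ConvexOn ℝ s f)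
    (hm : m ≠ 0) (hs : ∀ i, upd x i (u i) ∈ s)
    (hdesc : ∀ i, f (upd x i (u i)) + c * ‖u i - x i‖ ^ 2 ≤ f x) :
    f (x + (m : ℝ)⁻¹ • (u - x)) ≤ f x - c / m * ‖u - x‖ ^ 2 := by
  rw [← sum_inv_smul_upd hm]
  calc f (∑ i, (m : ℝ)⁻¹ • upd x i (u i)) ≤ ∑ i, (m : ℝ)⁻¹ • f (upd x i (u i)) :=
        hfc.map_sum_le (fun _ _ => by positivity) (by simp [hm]) (fun i _ => hs i)
    _ ≤ ∑ i, (m : ℝ)⁻¹ * (f x - c * ‖u i - x i‖ ^ 2) := by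
        simp_rw [smul_eq_mul]
        gcongr with i
        linarith [hdesc i]
    _ = f x - c / m * ‖u - x‖ ^ 2 := by
        rw [← Finset.mul_sum, Finset.sum_sub_distrib, ← Finset.mul_sum, ← norm_sub_sq_eq_sum]
        simp only [Finset.sum_const, Finset.card_univ, Fintype.card_fin, nsmul_eq_mul]
        field_simp

theorem ConvexOn.mul_apply_le_of_inner_gradient_le (hfc : ConvexOn ℝ Set.univ f) (hm : m ≠ 0)
    (hf : DifferentiableAt ℝ f u) (hdesc : ∀ i, f (upd x i (u i)) + c * ‖u i - x i‖ ^ 2 ≤ f x)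
    {K : ℝ} (hgrad : ⟪gradient f u, u - x⟫ ≤ K * ‖u - x‖ ^ 2) :
    (m : ℝ) * f u ≤ m * f x + (-c + ((m : ℝ) - 1) * K) * ‖u - x‖ ^ 2 := by
  have havg := hfc.apply_add_inv_smul_sub_le hm (fun i => Set.mem_univ _) hdesc
  have htan := hfc.apply_le_add_inner_gradient (Set.mem_univ u)
    (Set.mem_univ (x + (m : ℝ)⁻¹ • (u - x))) hf
  have hstep : u - (x + (m : ℝ)⁻¹ • (u - x)) = (1 - (m : ℝ)⁻¹) • (u - x) := by module
  rw [hstep, real_inner_smul_right] at htan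
  have hweight : 0 ≤ 1 - (m : ℝ)⁻¹ :=
    sub_nonneg.2 (inv_le_one_of_one_le₀ (by exact_mod_cast Nat.one_le_iff_ne_zero.2 hm))
  calc (m : ℝ) * f u
      ≤ m * (f x - c / m * ‖u - x‖ ^ 2 + (1 - (m : ℝ)⁻¹) * (K * ‖u - x‖ ^ 2)) := by
        gcongr
        linarith [mul_le_mul_of_nonneg_left hgrad hweight]
    _ = m * f x + (-c + ((m : ℝ) - 1) * K) * ‖u - x‖ ^ 2 := by
        field_simp
        ring

end Descent

theorem stmt_18_general {m : ℕ} {n : Fin m → ℕ}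
    (X : ∀ i : Fin m, Set (EuclideanSpace ℝ (Fin (n i))))
    (hXcvx : ∀ i, Convex ℝ (X i))
    (f : JVec m n → ℝ)
    (hf : ContDiff ℝ 1 f)
    (hfc : ConvexOn ℝ Set.univ f)
    (L : ℝ) (hL : 0 < L)
    (hLip : ∀ a b : JVec m n, (∀ i, a i ∈ X i) → (∀ i, b i ∈ X i) →
      ‖gradient f a - gradient f b‖ ≤ L * ‖a - b‖)
    (c : ℝ)
    (x : JVec m n) (hx : ∀ i, x i ∈ X i)
    (u : JVec m n) (huX : ∀ i, u i ∈ X i)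
    (hu : ∀ i : Fin m, ∀ z ∈ X i,
      f (upd x i (u i)) + c * ‖u i - x i‖ ^ 2 ≤ f (upd x i z) + c * ‖z - x i‖ ^ 2) :
    (m : ℝ) * f u ≤ m * f x
        + (-c + ((m : ℝ) - 1) * (Real.sqrt m * L - 2 * c)) * ‖u - x‖ ^ 2 ∧
      (((m : ℝ) - 1) / (2 * m - 1) * (Real.sqrt m * L) < c →
        f u ≤ f x ∧ (u ≠ x → f u < f x)) := by
  rcases Nat.eq_zero_or_pos m with rfl | hm
  · obtain rfl : u = x := Subsingleton.elim u x
    simp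
  have hfd : Differentiable ℝ f := hf.differentiable one_ne_zero
  have hgrad : ⟪gradient f u, u - x⟫ ≤ (√m * L - 2 * c) * ‖u - x‖ ^ 2 :=
    inner_sub_le_of_blockwise hL.le
      (fun i => inner_gradient_upd_sub_le (hXcvx i) (hx i) (huX i) (hfd _) (hu i))
      (fun i => hLip _ _ huX (upd_mem_pi hx (huX i)))
  have hdescent := hfc.mul_apply_le_of_inner_gradient_le hm.ne' (hfd u)
    (fun i => by simpa using hu i (x i) (hx i)) hgrad
  have hm' : (0 : ℝ) < m := Nat.cast_pos.2 hm
  refine ⟨hdescent, fun hcL => ?_⟩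
  have hcoeff : -c + ((m : ℝ) - 1) * (√m * L - 2 * c) < 0 := by
    rw [div_mul_eq_mul_div, div_lt_iff₀ (by linarith [(Nat.one_le_cast (α := ℝ)).2 hm])] at hcL
    linarith
  refine ⟨le_of_mul_le_mul_left ?_ hm', fun hne => lt_of_mul_lt_mul_left ?_ hm'.le⟩
  · nlinarith [sq_nonneg ‖u - x‖]
  · have : 0 < ‖u - x‖ ^ 2 := pow_pos (norm_pos_iff.2 (sub_ne_zero.2 hne)) 2
    nlinarith

/-- If each `uⁱ ∈ Xⁱ` minimizes `zⁱ ↦ f(zⁱ, x^{-i}) + c‖zⁱ − xⁱ‖²` over `Xⁱ`, then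
`m f(u) ≤ m f(x) + (−c + (m−1)(√m L − 2c))‖u − x‖²`; in particular, if
`c > ((m−1)/(2m−1))√m L` then `f(u) ≤ f(x)`, strictly unless `u = x`. -/
theorem stmt_18 {m : ℕ} {n : Fin m → ℕ}
    (X : ∀ i : Fin m, Set (EuclideanSpace ℝ (Fin (n i))))
    (hXne : ∀ i, (X i).Nonempty)
    (hXcpt : ∀ i, IsCompact (X i))
    (hXcvx : ∀ i, Convex ℝ (X i))
    (f : JVec m n → ℝ)
    (hf : ContDiff ℝ 1 f)
    (hfc : ConvexOn ℝ Set.univ f)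
    (L : ℝ) (hL : 0 < L)
    (hLip : ∀ a b : JVec m n, (∀ i, a i ∈ X i) → (∀ i, b i ∈ X i) →
      ‖gradient f a - gradient f b‖ ≤ L * ‖a - b‖)
    (c : ℝ) (hc : 0 < c)
    (x : JVec m n) (hx : ∀ i, x i ∈ X i)
    (u : JVec m n) (huX : ∀ i, u i ∈ X i)
    (hu : ∀ i : Fin m, ∀ z ∈ X i,
      f (upd x i (u i)) + c * ‖u i - x i‖ ^ 2 ≤ f (upd x i z) + c * ‖z - x i‖ ^ 2) :
    (m : ℝ) * f u ≤ m * f x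
        + (-c + ((m : ℝ) - 1) * (Real.sqrt m * L - 2 * c)) * ‖u - x‖ ^ 2 ∧
      (((m : ℝ) - 1) / (2 * m - 1) * (Real.sqrt m * L) < c →
        f u ≤ f x ∧ (u ≠ x → f u < f x)) :=
  stmt_18_general X hXcvx f hf hfc L hL hLip c x hx u huX hu
end
end
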